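/- More precisely: for x in the cylinder [ab], one has (σ∘H)^{2k}(x) = a·H^{2k}(b…) agreeing with a·ρ_b on at least 1 + 2^{2k} digits, i.e. (σ∘H)ⁿ(x) agrees with the appropriate one-digit extension of ρ_b on at least 2ⁿ digits after the first coordinate. -/

import Mathlib

open Filter Topology MeasureTheory

/-- The left shift on the full 2-shift `Σ = {0,1}^ℕ`. -/
def shift (x : ℕ → Bool) : ℕ → Bool := fun n => x (n + 1)

/-- The Thue–Morse substitution `H : 0 → 01, 1 → 10`, acting on sequences. -/
def subH (x : ℕ → Bool) : ℕ → Bool :=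
  fun n => if n % 2 = 0 then x (n / 2) else !x (n / 2)

/-- The Thue–Morse sequence: `tm n` is the parity of the number of 1s in
the binary expansion of `n`. -/
def tm (n : ℕ) : Bool := (Nat.digits 2 n).count 1 % 2 == 1

/-- The fixed point of `subH` starting with 0. -/
def rho0 : ℕ → Bool := tm

/-- The fixed point of `subH` starting with 1. -/
def rho1 : ℕ → Bool := fun n => !tm n

/-- `rhoB b` is the fixed point of `subH` starting with digit `b`. -/
def rhoB : Bool → ℕ → Bool
  | false => rho0
  | true => rho1

/-- The digit-flipping involution. -/
def flipSeq (x : ℕ → Bool) : ℕ → Bool := fun n => !x n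

/-- Prepend a digit to a sequence. -/
def consTM (a : Bool) (x : ℕ → Bool) : ℕ → Bool
  | 0 => a
  | n + 1 => x n

/-- The Thue–Morse subshift: the closure of the shift orbit of `rho0`. -/
def TMK : Set (ℕ → Bool) := closure {y | ∃ n, y = shift^[n] rho0}

/-- The renormalization operator `𝓡V = V ∘ σ ∘ H + V ∘ H`. -/
def RenOp (V : (ℕ → Bool) → ℝ) : (ℕ → Bool) → ℝ :=
  fun x => V (shift (subH x)) + V (subH x)

/-- The Birkhoff sum `S_k V = ∑_{i<k} V ∘ σⁱ`. -/
def birkhoff (V : (ℕ → Bool) → ℝ) (k : ℕ) (x : ℕ → Bool) : ℝ :=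
  ∑ i ∈ Finset.range k, V (shift^[i] x)

/-- The potential `U_c`: value `c` on `[01]`, `-c` on `[10]`, `0` on `[00] ∪ [11]`. -/
def Upot (c : ℝ) (x : ℕ → Bool) : ℝ :=
  if x 0 = false ∧ x 1 = true then c
  else if x 0 = true ∧ x 1 = false then -c else 0

/-- The sliding block code `π(x)_k = 1` iff `x_k ≠ x_{k+1}`. -/
def piTM (x : ℕ → Bool) : ℕ → Bool := fun n => x n != x (n + 1)

/-- The Feigenbaum substitution `0 → 11, 1 → 10`, acting on sequences. -/
def subHfeig (x : ℕ → Bool) : ℕ → Bool :=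
  fun n => if n % 2 = 0 then true else !x (n / 2)

/-!
Since `σ(H x) = x̄₀ · H(σ x)`, the map `σ ∘ H` flips the first digit and replaces the tail `σ x`
by `H(σ x)`. The substitution `H` doubles the length of a common prefix of two sequences and
fixes `ρ_b`; starting from the one-digit agreement `x₁ = b = ρ_b(0)`, after `n` steps the tail
agrees with `ρ_b` on `2ⁿ` digits.
-/

open PiNat

theorem tm_two_mul (n : ℕ) : tm (2 * n) = tm n := by
  rcases Nat.eq_zero_or_pos n with rfl | hn
  · rfl
  · simp [tm, Nat.digits_def' one_lt_two (Nat.mul_pos two_pos hn)]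

theorem tm_two_mul_add_one (n : ℕ) : tm (2 * n + 1) = !tm n := by
  have hdigits : Nat.digits 2 (2 * n + 1) = 1 :: Nat.digits 2 n := by
    rw [Nat.digits_def' one_lt_two (2 * n).succ_pos]
    simp [Nat.add_mod, Nat.add_div]
  simp only [tm, hdigits, List.count_cons_self]
  rcases Nat.mod_two_eq_zero_or_one ((Nat.digits 2 n).count 1) with h | h <;> simp [h, Nat.add_mod]

theorem rhoB_apply (b : Bool) (n : ℕ) : rhoB b n = (b ^^ tm n) := by
  cases b <;> simp [rhoB, rho0, rho1]

theorem subH_rhoB (b : Bool) : subH (rhoB b) = rhoB b := by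
  funext n
  obtain ⟨k, rfl | rfl⟩ := Nat.even_or_odd' n
  · simp [subH, rhoB_apply, tm_two_mul]
  · simp [subH, rhoB_apply, tm_two_mul_add_one, Nat.add_mod, Nat.add_div]

theorem shift_subH (x : ℕ → Bool) : shift (subH x) = consTM (!x 0) (subH (shift x)) := by
  funext n
  rcases n with _ | n
  · rfl
  · simp only [shift, subH, consTM, show (n + 1 + 1) % 2 = n % 2 by omega,
      show (n + 1 + 1) / 2 = n / 2 + 1 by omega]

theorem shift_consTM (a : Bool) (x : ℕ → Bool) : shift (consTM a x) = x := rfl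

theorem subH_mem_cylinder {x y : ℕ → Bool} {m : ℕ} (h : y ∈ cylinder x m) :
    subH y ∈ cylinder (subH x) (2 * m) := fun i hi => by
  simp only [subH, h (i / 2) (by omega)]

theorem iterate_shift_subH_zero (x : ℕ → Bool) (n : ℕ) :
    ((shift ∘ subH)^[n] x) 0 = (if n % 2 = 0 then x 0 else !x 0) := by
  induction n with
  | zero => rfl
  | succ n ih =>
    rw [Function.iterate_succ_apply', Function.comp_apply, shift_subH, consTM, ih]
    rcases Nat.mod_two_eq_zero_or_one n with h | h <;> simp [h, Nat.succ_mod_two_eq_zero_iff]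

theorem shift_iterate_shift_subH_mem_cylinder (x : ℕ → Bool) (n : ℕ) :
    shift ((shift ∘ subH)^[n] x) ∈ cylinder (rhoB (x 1)) (2 ^ n) := by
  induction n with
  | zero =>
    intro i hi
    rw [Nat.lt_one_iff.mp hi]
    cases h : x 1 <;> simp [shift, h, rhoB_apply, tm]
  | succ n ih =>
    rw [Function.iterate_succ_apply', Function.comp_apply, shift_subH, shift_consTM, ← subH_rhoB,
      pow_succ']
    exact subH_mem_cylinder ih

/-- for `x ∈ [ab]`, the sequence `(σ∘H)ⁿ(x)` starts with digit `a`
(`n` even) or `ā` (`n` odd), and agrees with `ρ_b` on at least `2ⁿ` digits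
after the first coordinate. -/
theorem stmt8 (x : ℕ → Bool) (a b : Bool) (ha : x 0 = a) (hb : x 1 = b) (n : ℕ) :
    ((shift ∘ subH)^[n] x) 0 = (if n % 2 = 0 then a else !a) ∧
    ∀ i, 1 ≤ i → i ≤ 2 ^ n → ((shift ∘ subH)^[n] x) i = rhoB b (i - 1) := by
  refine ⟨ha ▸ iterate_shift_subH_zero x n, fun i hi₁ hi₂ => ?_⟩
  obtain ⟨j, rfl⟩ : ∃ j, i = j + 1 := ⟨i - 1, by omega⟩
  exact hb ▸ shift_iterate_shift_subH_mem_cylinder x n j (by omega)
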